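/- arXiv:0809.1236 — 4 statements merged into one kernel-verified Lean document; each statement's English description precedes it below -/
import Mathlib

section
/- Let L ⊆ Σ* be a language and B ⊆ Σ* be a language containing the empty word such that Π(L ∩ B) = Π(L), and suppose Π(L) is a semilinear set that is a finite union of linear sets with constants c₁,…,c_ℓ, where uᵢ ∈ L satisfies Π(uᵢ) = cᵢ for each i. Then the language B' = u₁*⋯u_ℓ* B^ℓ satisfies Π(Lᵗ ∩ B') = Π(Lᵗ) for every natural number t. -/
open Computability

/-- The Parikh image of a word: counts occurrences of each letter. -/
def parikh {α : Type*} [DecidableEq α] (w : List α) : α → ℕ := fun a => w.count a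

/-- The Parikh image of a language. -/
def pim {α : Type*} [DecidableEq α] (L : Language α) : Set (α → ℕ) :=
  parikh '' (L : Set (List α))

/-!
Group the factors of a word of `L ^ t` by a linear set `cᵢ + Mᵢ` containing their Parikh images.
If `nᵢ > 0` factors fall into the `i`-th set, their images add up to `nᵢ • cᵢ + pᵢ` with `pᵢ ∈ Mᵢ`,
which is `(nᵢ - 1) • Π(uᵢ) + Π(zᵢ)` for a word `zᵢ ∈ L ∩ B` realising `cᵢ + pᵢ ∈ Π(L) = Π(L ∩ B)`.
Hence `u₁^(n₁-1) ⋯ u_ℓ^(n_ℓ-1) z₁ ⋯ z_ℓ`, with `zᵢ = ε` when `nᵢ = 0`, lies in `L ^ t ∩ B'` and has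
the Parikh image of the original word.
-/

section Parikh

variable {α : Type*} [DecidableEq α]

@[simp]
lemma parikh_nil : parikh ([] : List α) = 0 := by
  funext a; simp [parikh]

lemma parikh_append (x y : List α) : parikh (x ++ y) = parikh x + parikh y := by
  funext a; simp [parikh, List.count_append]

lemma parikh_flatten (S : List (List α)) : parikh S.flatten = (S.map parikh).sum := by
  induction S with
  | nil => simp
  | cons x S ih => rw [List.flatten_cons, parikh_append, ih, List.map_cons, List.sum_cons]

lemma parikh_flatten_ofFn {m : ℕ} (x : Fin m → List α) :
    parikh (List.ofFn x).flatten = ∑ i, parikh (x i) := by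
  rw [parikh_flatten, List.map_ofFn, List.sum_ofFn, Function.comp_def]

lemma parikh_flatten_replicate (m : ℕ) (x : List α) :
    parikh (List.replicate m x).flatten = m • parikh x := by
  rw [parikh_flatten, List.map_replicate, List.sum_replicate]

end Parikh

namespace Language

variable {α : Type*}

lemma flatten_ofFn_mem_prod_ofFn : ∀ {m : ℕ} {A : Fin m → Language α} {x : Fin m → List α},
    (∀ i, x i ∈ A i) → (List.ofFn x).flatten ∈ (List.ofFn A).prod
  | 0, _, _, _ => by simp [mem_one]
  | _ + 1, _, _, h => by
    rw [List.ofFn_succ, List.ofFn_succ, List.flatten_cons, List.prod_cons]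
    exact append_mem_mul (h 0) (flatten_ofFn_mem_prod_ofFn fun i => h i.succ)

lemma flatten_ofFn_mem_pow_sum {L : Language α} :
    ∀ {m : ℕ} {k : Fin m → ℕ} {x : Fin m → List α},
    (∀ i, x i ∈ L ^ k i) → (List.ofFn x).flatten ∈ L ^ ∑ i, k i
  | 0, _, _, _ => by simp [mem_one]
  | _ + 1, _, _, h => by
    rw [List.ofFn_succ, List.flatten_cons, Fin.sum_univ_succ, pow_add]
    exact append_mem_mul (h 0) (flatten_ofFn_mem_pow_sum fun i => h i.succ)

lemma flatten_replicate_mem_pow {L : Language α} {x : List α} (hx : x ∈ L) (m : ℕ) :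
    (List.replicate m x).flatten ∈ L ^ m :=
  mem_pow.mpr ⟨_, rfl, List.length_replicate, fun _ hy => List.eq_of_mem_replicate hy ▸ hx⟩

lemma flatten_replicate_mem_kstar_singleton (x : List α) (m : ℕ) :
    (List.replicate m x).flatten ∈ ({x} : Language α)∗ :=
  join_mem_kstar fun _ hy => List.eq_of_mem_replicate hy

end Language

section LinearSets

variable {ι V : Type*} [AddCommMonoid V]

lemma mem_iUnion_linearSet_iff {k : ι → ℕ} (c : ι → V) (per : (i : ι) → Fin (k i) → V) (v : V) :
    v ∈ ⋃ i, {v | ∃ lam : Fin (k i) → ℕ, v = c i + ∑ j, lam j • per i j} ↔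
      ∃ i, ∃ q ∈ AddSubmonoid.closure (Set.range (per i)), v = c i + q := by
  simp only [Set.mem_iUnion, Set.mem_ofPred_eq, AddSubmonoid.mem_closure_range_iff_of_fintype]
  exact exists_congr fun i => ⟨fun ⟨lam, h⟩ => ⟨_, ⟨lam, rfl⟩, h⟩, fun ⟨_, ⟨lam, rfl⟩, h⟩ => ⟨lam, h⟩⟩

lemma List.exists_sum_eq_sum_nsmul_add [Fintype ι] [DecidableEq ι] (c : ι → V)
    (M : ι → AddSubmonoid V) :
    ∀ vs : List V, (∀ v ∈ vs, ∃ i, ∃ q ∈ M i, v = c i + q) →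
      ∃ n : ι → ℕ, ∃ p : ι → V, ∑ i, n i = vs.length ∧ (∀ i, p i ∈ M i) ∧
        (∀ i, n i = 0 → p i = 0) ∧ vs.sum = ∑ i, (n i • c i + p i)
  | [], _ => ⟨0, 0, by simp, fun i => zero_mem _, fun _ _ => rfl, by simp⟩
  | v :: vs, h => by
    obtain ⟨i, q, hq, rfl⟩ := h v List.mem_cons_self
    obtain ⟨n, p, hn, hp, h0, hsum⟩ :=
      exists_sum_eq_sum_nsmul_add c M vs fun w hw => h w (List.mem_cons_of_mem _ hw)
    refine ⟨n + Pi.single i 1, p + Pi.single i q, ?_, fun j => ?_, fun j => ?_, ?_⟩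
    · simp [Finset.sum_add_distrib, hn, add_comm]
    · rcases eq_or_ne j i with rfl | hj
      · simpa using add_mem (hp j) hq
      · simpa [hj] using hp j
    · rcases eq_or_ne j i with rfl | hj
      · simp
      · simpa [hj] using h0 j
    · simp only [sum_cons, hsum, Finset.sum_add_distrib, Pi.add_apply, Pi.single_apply, add_smul,
        ite_smul, one_smul, zero_nsmul, Finset.sum_ite_eq', Finset.mem_univ, ↓reduceIte]
      abel

end LinearSets

lemma exists_nsmul_add_parikh_eq {α : Type*} [DecidableEq α] {L B : Language α} (hε : [] ∈ B)
    {c : α → ℕ} {M : AddSubmonoid (α → ℕ)} (hLB : ∀ q ∈ M, c + q ∈ pim (L ⊓ B))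
    {n : ℕ} {p : α → ℕ} (hp : p ∈ M) (h0 : n = 0 → p = 0) :
    ∃ a e : ℕ, ∃ z, z ∈ L ^ e ∧ z ∈ B ∧ a + e = n ∧ a • c + parikh z = n • c + p := by
  cases n with
  | zero => exact ⟨0, 0, [], Language.nil_mem_one, hε, rfl, by simp [h0 rfl]⟩
  | succ n =>
    obtain ⟨z, ⟨hzL, hzB⟩, hzp⟩ := hLB p hp
    exact ⟨n, 1, z, by rwa [pow_one], hzB, rfl, by rw [hzp, succ_nsmul, add_assoc]⟩

/-- If Π(L ⊓ B) = Π(L), ε ∈ B, and Π(L) is semilinear with constants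
c₁,…,c_ℓ realized by words u₁,…,u_ℓ ∈ L, then B' = u₁*⋯u_ℓ* B^ℓ
satisfies Π(Lᵗ ⊓ B') = Π(Lᵗ) for every t. -/
theorem parikh_power_bounded {α : Type*} [DecidableEq α]
    (L B : Language α)
    (hε : [] ∈ B)
    (hLB : pim (L ⊓ B) = pim L)
    (ℓ : ℕ)
    (u : Fin ℓ → List α)
    (hu : ∀ i, u i ∈ L)
    (k : Fin ℓ → ℕ)
    (per : (i : Fin ℓ) → Fin (k i) → (α → ℕ))
    (hsemi : pim L =
      ⋃ i : Fin ℓ, {v | ∃ lam : Fin (k i) → ℕ,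
        v = parikh (u i) + ∑ j, lam j • per i j}) :
    ∀ t : ℕ,
      pim (L ^ t ⊓ ((List.ofFn fun i => (({u i} : Language α))∗).prod * B ^ ℓ)) =
        pim (L ^ t) := by
  intro t
  refine (Set.image_mono fun _ hx => hx.1).antisymm ?_
  rintro _ ⟨w, hw, rfl⟩
  obtain ⟨S, rfl, rfl, hS⟩ := Language.mem_pow.mp hw
  have hlin (v : α → ℕ) := (Set.ext_iff.mp hsemi v).trans (mem_iUnion_linearSet_iff _ per v)
  obtain ⟨n, p, hn, hp, h0, hsum⟩ := List.exists_sum_eq_sum_nsmul_add _ _ (S.map parikh) <| by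
    simpa using fun x hx => (hlin _).mp ⟨x, hS x hx, rfl⟩
  choose a e z hzL hzB hae hzp using fun i =>
    exists_nsmul_add_parikh_eq hε (fun q hq => hLB ▸ (hlin _).mpr ⟨i, q, hq, rfl⟩) (hp i) (h0 i)
  refine ⟨(List.ofFn fun i => (List.replicate (a i) (u i)).flatten).flatten ++
    (List.ofFn z).flatten, ⟨?_, ?_⟩, ?_⟩
  · rw [← List.length_map parikh, ← hn, ← Finset.sum_congr rfl fun i _ => hae i,
      Finset.sum_add_distrib, pow_add]
    exact Language.append_mem_mul
      (Language.flatten_ofFn_mem_pow_sum fun i => Language.flatten_replicate_mem_pow (hu i) _)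
      (Language.flatten_ofFn_mem_pow_sum hzL)
  · exact Language.append_mem_mul
      (Language.flatten_ofFn_mem_prod_ofFn fun _ =>
        Language.flatten_replicate_mem_kstar_singleton _ _)
      (Language.mem_pow.mpr ⟨_, rfl, List.length_ofFn, List.forall_mem_ofFn_iff.mpr hzB⟩)
  · rw [parikh_append, parikh_flatten_ofFn, parikh_flatten_ofFn, parikh_flatten, hsum,
      ← Finset.sum_add_distrib]
    simp only [parikh_flatten_replicate, hzp]
end

section
/- Parikh-equivalent bounded subsets compose under concatenation: if R₁, R₂ ⊆ Σ* and B₁, B₂ ⊆ Σ* satisfy Π(R₁ ∩ B₁) = Π(R₁) and Π(R₂ ∩ B₂) = Π(R₂), then Π((R₁·R₂) ∩ (B₁·B₂)) = Π(R₁·R₂). -/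
open Computability

lemma parikh_append_s8 {α : Type*} [DecidableEq α] (u v : List α) :
    parikh (u ++ v) = fun a => parikh u a + parikh v a := by
  funext a; simp [parikh]

theorem parikh_bounded_concat {α : Type*} [DecidableEq α]
    (R₁ R₂ B₁ B₂ : Language α)
    (h₁ : pim (R₁ ⊓ B₁) = pim R₁)
    (h₂ : pim (R₂ ⊓ B₂) = pim R₂) :
    pim (R₁ * R₂ ⊓ B₁ * B₂) = pim (R₁ * R₂) := by
  apply Set.Subset.antisymm
  · rintro x ⟨w, ⟨hw, -⟩, rfl⟩
    exact ⟨w, hw, rfl⟩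
  · rintro x ⟨w, ⟨u, hu, v, hv, rfl⟩, rfl⟩
    have mu : parikh u ∈ pim (R₁ ⊓ B₁) := h₁ ▸ ⟨u, hu, rfl⟩
    have mv : parikh v ∈ pim (R₂ ⊓ B₂) := h₂ ▸ ⟨v, hv, rfl⟩
    obtain ⟨u', ⟨hu'R, hu'B⟩, hpu⟩ := mu
    obtain ⟨v', ⟨hv'R, hv'B⟩, hpv⟩ := mv
    refine ⟨u' ++ v', ⟨⟨u', hu'R, v', hv'R, rfl⟩, ⟨u', hu'B, v', hv'B, rfl⟩⟩, ?_⟩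
    rw [parikh_append_s8, parikh_append_s8, hpu, hpv]
end

section
/- Progress lemma for iterated removal of Parikh-equivalent subsets: let (L_i)_{i∈ℕ} and (B_i)_{i∈ℕ} be sequences of languages over Σ with L₀ = L, Π(L_i ∩ B_i) = Π(L_i) for every i, and L_{i+1} = L_i ∩ (Σ* \ B_i). Then for every word w ∈ L there exists i ∈ ℕ such that w ∉ L_i. -/
open Computability

lemma length_eq_sum_parikh {α : Type*} [Fintype α] [DecidableEq α] (w : List α) :
    w.length = ∑ a, w.count a := by
  have h := Multiset.toFinset_sum_count_eq (w : Multiset α)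
  rw [Finset.sum_subset (Finset.subset_univ _) (fun a _ ha => by
    simpa using List.count_eq_zero_of_not_mem (by simpa using ha))] at h
  simpa using h.symm

/-- Progress lemma: iterated removal of Parikh-equivalent subsets eventually
removes every word. -/
theorem progress_lemma {α : Type*} [Fintype α] [DecidableEq α]
    (L₀ : Language α) (L B : ℕ → Language α)
    (h0 : L 0 = L₀)
    (hPB : ∀ i, pim (L i ⊓ B i) = pim (L i))
    (hstep : ∀ i, L (i + 1) = L i ⊓ (B i)ᶜ) :
    ∀ w ∈ L₀, ∃ i : ℕ, w ∉ L i := by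
  intro w hw
  by_contra h
  push_neg at h
  -- L is antitone
  have hmono : ∀ i j, i ≤ j → L j ≤ L i := by
    intro i j hij
    induction j with
    | zero => simpa using (Nat.le_zero.mp hij) ▸ le_refl _
    | succ n ih =>
      rcases Nat.lt_or_ge i (n+1) with hlt | hge
      · exact le_trans (by rw [hstep n]; exact inf_le_left) (ih (Nat.lt_succ_iff.mp hlt))
      · have : i = n + 1 := le_antisymm hij hge
        rw [this]
  -- choose witness words
  have hchoice : ∀ i : ℕ, ∃ v : List α, v ∈ L i ⊓ B i ∧ parikh v = parikh w := by
    intro i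
    have hwL : w ∈ L i := h i
    have : parikh w ∈ pim (L i) := ⟨w, hwL, rfl⟩
    rw [← hPB i] at this
    obtain ⟨v, hv, hpv⟩ := this
    exact ⟨v, hv, hpv⟩
  choose v hvmem hvp using hchoice
  -- v i ∉ L (i+1)
  have hnot : ∀ i, v i ∉ L (i + 1) := by
    intro i hmem
    rw [hstep i] at hmem
    exact hmem.2 (hvmem i).2
  -- v injective
  have hinj : Function.Injective v := by
    intro i j hij
    by_contra hne
    wlog hlt : i < j generalizing i j
    · exact this hij.symm (Ne.symm hne) (lt_of_le_of_ne (not_lt.mp hlt) (Ne.symm hne))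
    have : v j ∈ L (i + 1) := hmono (i+1) j hlt (hvmem j).1
    rw [← hij] at this
    exact hnot i this
  -- all v i lie in a finite set
  have hfin : {l : List α | l.length = w.length}.Finite := List.finite_length_eq α w.length
  have hlen : ∀ i, (v i).length = w.length := by
    intro i
    rw [length_eq_sum_parikh, length_eq_sum_parikh w]
    exact Finset.sum_congr rfl fun a _ => congrFun (hvp i) a
  exact Set.infinite_of_injective_forall_mem (s := {l : List α | l.length = w.length})
    hinj hlen hfin
end

section
/- Let B = w₁*⋯w_n* with wᵢ ∈ Σ*, let A = {a₁,…,a_n} be a fresh alphabet, and let h : A* → Σ* be the homomorphism sending aᵢ to wᵢ. Then for languages L₁,…,L_k ⊆ Σ*: the intersection ⋂ᵢ Π_A(h⁻¹(Lᵢ ∩ B) ∩ a₁*⋯a_n*) is nonempty if and only if (⋂ᵢ Lᵢ) ∩ B is nonempty. -/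
open Computability

/-- The homomorphism h : A* → Σ* sending the i-th fresh letter to wᵢ,
where A = Fin n is the fresh alphabet. -/
def freshHom {T : Type*} {n : ℕ} (w : Fin n → List T) (u : List (Fin n)) : List T :=
  (u.map w).flatten

/-- x ∈ {a}∗ iff x is a repeated a. -/
lemma mem_kstar_singleton {α : Type*} (a : List α) (x : List α) :
    x ∈ (({a} : Language α))∗ ↔ ∃ m, x = (List.replicate m a).flatten := by
  rw [Language.mem_kstar]
  constructor
  · rintro ⟨Ls, rfl, h⟩
    refine ⟨Ls.length, ?_⟩
    congr 1
    exact (List.eq_replicate_iff.2 ⟨rfl, h⟩)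
  · rintro ⟨m, rfl⟩
    exact ⟨List.replicate m a, rfl, fun y hy => (List.eq_of_mem_replicate hy)⟩

lemma mem_prodStar {α : Type*} (n : ℕ) (f : Fin n → List α) (x : List α) :
    x ∈ (List.ofFn fun j => (({f j} : Language α))∗).prod ↔
      ∃ t : Fin n → ℕ,
        x = (List.ofFn fun j => (List.replicate (t j) (f j)).flatten).flatten := by
  induction n generalizing x with
  | zero =>
    simp only [List.ofFn_zero, List.prod_nil, List.flatten_nil]
    constructor
    · intro h
      exact ⟨fun i => 0, by simpa [Language.mem_one] using h⟩
    · rintro ⟨t, rfl⟩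
      simp [Language.mem_one]
  | succ m ih =>
    rw [List.ofFn_succ, List.prod_cons, Language.mem_mul]
    constructor
    · rintro ⟨a, ha, b, hb, rfl⟩
      obtain ⟨m0, rfl⟩ := (mem_kstar_singleton _ _).1 ha
      obtain ⟨t, rfl⟩ := (ih _ _).1 hb
      refine ⟨Fin.cons m0 t, ?_⟩
      simp [List.ofFn_succ, Fin.cons_succ]
    · rintro ⟨t, rfl⟩
      refine ⟨(List.replicate (t 0) (f 0)).flatten, (mem_kstar_singleton _ _).2 ⟨_, rfl⟩,
        (List.ofFn fun j : Fin m => (List.replicate (t j.succ) (f j.succ)).flatten).flatten,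
        (ih _ _).2 ⟨fun j => t j.succ, rfl⟩, ?_⟩
      simp [List.ofFn_succ]

/-- The canonical word a₀^{t₀} ⋯ a_{n-1}^{t_{n-1}} over the fresh alphabet. -/
def canon (n : ℕ) (t : Fin n → ℕ) : List (Fin n) :=
  (List.ofFn fun j => List.replicate (t j) j).flatten

lemma parikh_canon (n : ℕ) (t : Fin n → ℕ) : parikh (canon n t) = t := by
  funext a
  simp only [parikh, canon, List.count_flatten, List.map_map]
  rw [List.map_ofFn, List.sum_ofFn]
  simp only [Function.comp, List.count_replicate]
  simp

lemma replicate_eq_flatten {α : Type*} (m : ℕ) (a : α) :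
    List.replicate m a = (List.replicate m [a]).flatten := by
  simp

lemma canon_replicate_flatten (n : ℕ) (t : Fin n → ℕ) :
    canon n t = (List.ofFn fun j => (List.replicate (t j) ([j] : List (Fin n))).flatten).flatten := by
  unfold canon
  simp only [← replicate_eq_flatten]

lemma freshHom_canon (n : ℕ) {T : Type*} (w : Fin n → List T) (t : Fin n → ℕ) :
    freshHom w (canon n t) =
      (List.ofFn fun j => (List.replicate (t j) (w j)).flatten).flatten := by
  unfold freshHom canon
  rw [List.map_flatten, List.map_ofFn, List.flatten_flatten]
  congr 1
  rw [List.map_ofFn]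
  congr 1
  funext j
  simp [Function.comp, List.map_replicate]

theorem bounded_intersection_char {T : Type*} [DecidableEq T]
    (n : ℕ) (w : Fin n → List T) (k : ℕ) (L : Fin k → Language T) :
    (⋂ i : Fin k,
        pim ((freshHom w ⁻¹'
              ((L i ⊓ (List.ofFn fun j => (({w j} : Language T))∗).prod : Language T) :
                Set (List T)) ⊓
            (List.ofFn fun j => (({[j]} : Language (Fin n)))∗).prod : Language (Fin n)))).Nonempty ↔
      (((⨅ i : Fin k, L i) ⊓
          (List.ofFn fun j => (({w j} : Language T))∗).prod : Language T) :
        Set (List T)).Nonempty := by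
  have hB : ∀ x : List T, x ∈ (List.ofFn fun j => (({w j} : Language T))∗).prod ↔
      ∃ t, x = freshHom w (canon n t) := by
    intro x
    rw [mem_prodStar]
    exact exists_congr fun t => by rw [freshHom_canon]
  have hA : ∀ u : List (Fin n), u ∈ (List.ofFn fun j => (({[j]} : Language (Fin n)))∗).prod ↔
      ∃ t, u = canon n t := by
    intro u
    rw [mem_prodStar n (fun j => [j])]
    exact exists_congr fun t => by rw [canon_replicate_flatten]
  constructor
  · rintro ⟨p, hp⟩
    simp only [Set.mem_iInter] at hp
    have hx : ∀ i, freshHom w (canon n p) ∈ L i := by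
      intro i
      obtain ⟨u, hu, hpu⟩ := hp i
      obtain ⟨hu1, hu2⟩ := hu
      obtain ⟨t, rfl⟩ := (hA u).1 hu2
      rw [parikh_canon] at hpu
      subst hpu
      exact hu1.1
    exact ⟨freshHom w (canon n p), ⟨Set.mem_iInter.2 hx, (hB _).2 ⟨p, rfl⟩⟩⟩
  · rintro ⟨x, hx1, hx2⟩
    obtain ⟨t, rfl⟩ := (hB x).1 hx2
    have hL : ∀ i, freshHom w (canon n t) ∈ L i := fun i => Set.mem_iInter.1 hx1 i
    refine ⟨t, Set.mem_iInter.2 fun i => ?_⟩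
    exact ⟨canon n t, ⟨⟨hL i, (hB _).2 ⟨t, rfl⟩⟩, (hA _).2 ⟨t, rfl⟩⟩, parikh_canon n t⟩
end
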